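/- arXiv:2011.00204 — 4 statements merged into one kernel-verified Lean document; each statement's English description precedes it below -/
import Mathlib

section
/- Let n ≥ 3 be an integer and c₀ > 0 a real constant, and define u(ρ) = √(1 − 1/(1 + c₀·sinh^{n−2}(ρ)·cosh²(ρ))) for ρ > 0. Then u is differentiable on (0, ∞) and satisfies, for every ρ > 0, the radial quasi-spherical equation (n−1)·coth(ρ)·u′(ρ) = (1/2)·(u(ρ) − u(ρ)³)·( (n−1)(n−2)/sinh²(ρ) + n(n−1) ). -/
/-!
Write `u = √(1 − 1/(1 + g))` with `g = c₀ sinh^{n−2} cosh²`. For any positive `g` one has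
`u² = g/(1 + g)` and `u − u³ = u/(1 + g)`, so the chain rule gives `u′ = (u − u³) · g′/(2g)`:
the equation only involves the logarithmic derivative of `g`. That of `sinh^k cosh²` is
`k coth + 2 tanh = (k + (k + 2) sinh²)/(sinh cosh)`, and multiplying by `(n − 1) coth`
turns it into `(n − 2)/sinh² + n`.
-/

open Real

lemma hasDerivAt_sqrt_one_sub_inv_one_add {g : ℝ → ℝ} {g' x : ℝ} (hg : HasDerivAt g g' x)
    (hgx : 0 < g x) :
    HasDerivAt (fun y => √(1 - 1 / (1 + g y)))
      ((√(1 - 1 / (1 + g x)) - √(1 - 1 / (1 + g x)) ^ 3) * (g' / (2 * g x))) x := by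
  have hpos : 0 < 1 - 1 / (1 + g x) := by
    rw [sub_pos, div_lt_one (by linarith)]
    linarith
  have hinner : HasDerivAt (fun y => 1 - 1 / (1 + g y)) (g' / (1 + g x) ^ 2) x := by
    refine (((hasDerivAt_const x 1).fun_div (hg.const_add 1) (by linarith)).const_sub 1).congr_deriv ?_
    ring
  refine (hinner.sqrt hpos.ne').congr_deriv ?_
  set u := √(1 - 1 / (1 + g x))
  have hu : 0 < u := Real.sqrt_pos.mpr hpos
  have hu_sq : u ^ 2 = 1 - 1 / (1 + g x) := Real.sq_sqrt hpos.le
  have hu_cube : u ^ 3 = u * (1 - 1 / (1 + g x)) := by rw [← hu_sq]; ring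
  have hu_sq_mul : u ^ 2 * (1 + g x) = g x := by rw [hu_sq]; field_simp; ring
  rw [hu_cube]
  field_simp
  linear_combination (-g') * hu_sq_mul

lemma hasDerivAt_sinh_pow_mul_cosh_sq (k : ℕ) {x : ℝ} (hx : x ≠ 0) :
    HasDerivAt (fun y => sinh y ^ k * cosh y ^ 2)
      (sinh x ^ k * cosh x ^ 2 * ((k + (k + 2) * sinh x ^ 2) / (sinh x * cosh x))) x := by
  have hs : sinh x ≠ 0 := sinh_ne_zero.mpr hx
  have hc : cosh x ≠ 0 := (cosh_pos x).ne'
  refine (((hasDerivAt_sinh x).fun_pow k).fun_mul ((hasDerivAt_cosh x).fun_pow 2)).congr_deriv ?_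
  rcases k with _ | k
  · field_simp
    ring
  · simp only [Nat.add_sub_cancel, Nat.cast_add, Nat.cast_one, Nat.cast_ofNat]
    field_simp
    linear_combination ((k + 1) * sinh x ^ k * sinh x * cosh x) * cosh_sq x

/-- The explicit radial quasi-spherical solution
`u(ρ) = √(1 − 1/(1 + c₀ sinh^{n−2}(ρ) cosh²(ρ)))` is differentiable on `(0, ∞)` and
satisfies `(n−1) coth(ρ) u′(ρ) = ½ (u − u³)((n−1)(n−2)/sinh²ρ + n(n−1))`. -/
theorem stmt_0 (n : ℕ) (hn : 3 ≤ n) (c₀ : ℝ) (hc₀ : 0 < c₀)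
    (u : ℝ → ℝ)
    (hu : ∀ ρ : ℝ, u ρ = Real.sqrt (1 - 1 / (1 + c₀ * Real.sinh ρ ^ (n - 2) * Real.cosh ρ ^ 2))) :
    ∀ ρ : ℝ, 0 < ρ →
      DifferentiableAt ℝ u ρ ∧
      ((n : ℝ) - 1) * (Real.cosh ρ / Real.sinh ρ) * deriv u ρ =
        (1 / 2) * (u ρ - u ρ ^ 3) *
          (((n : ℝ) - 1) * ((n : ℝ) - 2) / Real.sinh ρ ^ 2 + (n : ℝ) * ((n : ℝ) - 1)) := by
  intro ρ hρ
  have hs : 0 < sinh ρ := sinh_pos_iff.mpr hρ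
  have hk : ((n - 2 : ℕ) : ℝ) = n - 2 := by push_cast [show 2 ≤ n by omega]; ring
  have hg := (hasDerivAt_sinh_pow_mul_cosh_sq (n - 2) hρ.ne').const_mul c₀
  simp only [← mul_assoc] at hg
  have hu' := hasDerivAt_sqrt_one_sub_inv_one_add hg (by positivity)
  rw [← funext hu, ← hu ρ] at hu'
  refine ⟨hu'.differentiableAt, ?_⟩
  rw [hu'.deriv, hk]
  field_simp
  ring
end

section
/- Let n ≥ 3 be an integer and c₀ > 0, and define u(ρ) = √(1 − 1/(1 + c₀·sinh^{n−2}(ρ)·cosh²(ρ))) for ρ > 0. Then the function ρ ↦ 1 − u(ρ) is integrable on (0, ∞), and setting U(ρ) := ρ + ∫_ρ^∞ (1 − u(s)) ds, one has lim_{ρ→∞} (U(ρ) − ρ)·e^{nρ} = 2^{n−1}/(n·c₀). -/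
/-!
With `f = c₀ sinh^{n-2} cosh²` we have `u = √(1 - 1/(1+f))`, hence `1 - u = ((1 + f)(1 + u))⁻¹`.
Since `f(ρ) e^{-nρ} → c₀/2ⁿ` and `u → 1`, this gives `(1 - u(ρ)) e^{nρ} → 2^{n-1}/c₀`.
A function `g` with `g(s) e^{as} → L`, `a > 0`, is `O(e^{-as})`, so it is integrable at infinity,
and comparing `g` with `L e^{-as}` shows `e^{aρ} ∫_ρ^∞ g → L/a`.
-/

open Real Filter MeasureTheory Set Topology

section ExponentialTail

variable {g : ℝ → ℝ} {a L : ℝ}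

lemma integral_Ioi_exp_neg_mul (ha : 0 < a) (ρ : ℝ) :
    ∫ s in Ioi ρ, exp (-a * s) = exp (-a * ρ) / a := by
  rw [integral_exp_mul_Ioi (neg_neg_of_pos ha), div_neg, neg_div, neg_neg]

lemma integrableOn_Ioi_of_tendsto_mul_exp (ha : 0 < a) {c : ℝ} (hg : ContinuousOn g (Ici c))
    (hlim : Tendsto (fun s => g s * exp (a * s)) atTop (𝓝 L)) : IntegrableOn g (Ioi c) := by
  refine integrable_of_isBigO_exp_neg ha hg ?_
  have := (hlim.isBigO_one ℝ).mul (Asymptotics.isBigO_refl (fun s => exp (-a * s)) atTop)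
  simpa [mul_assoc, ← exp_add] using this

lemma abs_integral_Ioi_mul_exp_sub_le {ρ ε : ℝ} (ha : 0 < a) (hg : IntegrableOn g (Ioi ρ))
    (hε : ∀ s > ρ, |g s * exp (a * s) - L| ≤ ε) :
    |(∫ s in Ioi ρ, g s) * exp (a * ρ) - L / a| ≤ ε / a := by
  have hexp : IntegrableOn (fun s => exp (-a * s)) (Ioi ρ) := exp_neg_integrableOn_Ioi ρ ha
  have hpoint : ∀ s > ρ, ‖g s - L * exp (-a * s)‖ ≤ ε * exp (-a * s) := by
    intro s hs
    have : g s - L * exp (-a * s) = (g s * exp (a * s) - L) * exp (-a * s) := by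
      rw [sub_mul, mul_assoc, ← exp_add]; simp
    rw [this, norm_mul, norm_eq_abs, norm_of_nonneg (exp_pos _).le]
    exact mul_le_mul_of_nonneg_right (hε s hs) (exp_pos _).le
  have hint : |(∫ s in Ioi ρ, g s) - L * (exp (-a * ρ) / a)| ≤ ε * (exp (-a * ρ) / a) := by
    rw [← integral_Ioi_exp_neg_mul ha, ← integral_const_mul, ← integral_const_mul,
      ← integral_sub hg (hexp.const_mul L)]
    exact norm_integral_le_of_norm_le (hexp.const_mul ε)
      ((ae_restrict_iff' measurableSet_Ioi).mpr (.of_forall hpoint))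
  have hrescale : (∫ s in Ioi ρ, g s) * exp (a * ρ) - L / a
      = ((∫ s in Ioi ρ, g s) - L * (exp (-a * ρ) / a)) * exp (a * ρ) := by
    rw [neg_mul, exp_neg]
    field_simp
  calc |(∫ s in Ioi ρ, g s) * exp (a * ρ) - L / a|
      = |(∫ s in Ioi ρ, g s) - L * (exp (-a * ρ) / a)| * exp (a * ρ) := by
        rw [hrescale, abs_mul, abs_of_pos (exp_pos _)]
    _ ≤ ε * (exp (-a * ρ) / a) * exp (a * ρ) := by gcongr
    _ = ε / a := by
        rw [neg_mul, exp_neg]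
        field_simp

theorem tendsto_integral_Ioi_mul_exp (ha : 0 < a) {c : ℝ} (hg : IntegrableOn g (Ioi c))
    (hlim : Tendsto (fun s => g s * exp (a * s)) atTop (𝓝 L)) :
    Tendsto (fun ρ => (∫ s in Ioi ρ, g s) * exp (a * ρ)) atTop (𝓝 (L / a)) := by
  refine Metric.tendsto_nhds.mpr fun ε hε => ?_
  obtain ⟨ρ₀, hρ₀⟩ := eventually_atTop.mp (Metric.tendsto_nhds.mp hlim (ε * a / 2) (by positivity))
  filter_upwards [eventually_ge_atTop ρ₀, eventually_ge_atTop c] with ρ hρ₀ρ hcρ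
  calc dist ((∫ s in Ioi ρ, g s) * exp (a * ρ)) (L / a)
      ≤ ε * a / 2 / a :=
        abs_integral_Ioi_mul_exp_sub_le ha (hg.mono_set (Ioi_subset_Ioi hcρ))
          fun s hs => (hρ₀ s (by linarith [hs.le])).le
    _ < ε := by field_simp; linarith

end ExponentialTail

lemma tendsto_sinh_mul_exp_neg : Tendsto (fun s => sinh s * exp (-s)) atTop (𝓝 (1 / 2)) := by
  have h : Tendsto (fun s => (1 - exp (-s) ^ 2) / 2) atTop (𝓝 (1 / 2)) := by
    simpa using (tendsto_exp_neg_atTop_nhds_zero.pow 2).const_sub (1 : ℝ) |>.div_const 2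
  refine h.congr fun s => ?_
  rw [sinh_eq, exp_neg]
  field_simp

lemma tendsto_cosh_mul_exp_neg : Tendsto (fun s => cosh s * exp (-s)) atTop (𝓝 (1 / 2)) := by
  have h : Tendsto (fun s => (1 + exp (-s) ^ 2) / 2) atTop (𝓝 (1 / 2)) := by
    simpa using (tendsto_exp_neg_atTop_nhds_zero.pow 2).const_add (1 : ℝ) |>.div_const 2
  refine h.congr fun s => ?_
  rw [cosh_eq, exp_neg]
  field_simp

lemma one_sub_sqrt_one_sub_inv {x : ℝ} (hx : 0 ≤ x) :
    1 - √(1 - 1 / (1 + x)) = ((1 + x) * (1 + √(1 - 1 / (1 + x))))⁻¹ := by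
  set v := √(1 - 1 / (1 + x))
  have hv : v ^ 2 = 1 - 1 / (1 + x) :=
    sq_sqrt (by rw [sub_nonneg, div_le_one (by linarith)]; linarith)
  refine eq_inv_of_mul_eq_one_left ?_
  field_simp at hv
  linear_combination -hv

lemma tendsto_one_sub_sqrt_mul_exp {f : ℝ → ℝ} {a K : ℝ} (ha : 0 < a) (hK : 0 < K)
    (hf : Tendsto (fun s => f s * exp (-(a * s))) atTop (𝓝 K)) :
    Tendsto (fun s => (1 - √(1 - 1 / (1 + f s))) * exp (a * s)) atTop (𝓝 (K * 2)⁻¹) := by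
  have has : Tendsto (fun s => a * s) atTop atTop := tendsto_id.const_mul_atTop ha
  have hf_top : Tendsto f atTop atTop :=
    (hf.pos_mul_atTop hK (tendsto_exp_atTop.comp has)).congr fun s => by
      simp [mul_assoc, ← exp_add]
  have hsqrt : Tendsto (fun s => √(1 - 1 / (1 + f s))) atTop (𝓝 1) := by
    have h := (tendsto_inv_atTop_zero.comp (tendsto_atTop_add_const_left _ 1 hf_top)).const_sub 1
    simpa [Function.comp_def] using (continuous_sqrt.tendsto _).comp h
  have hden : Tendsto (fun s => (exp (-(a * s)) + f s * exp (-(a * s))) *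
      (1 + √(1 - 1 / (1 + f s)))) atTop (𝓝 (K * 2)) := by
    have h := ((tendsto_exp_neg_atTop_nhds_zero.comp has).add hf).mul (hsqrt.const_add 1)
    simpa [one_div, one_add_one_eq_two] using h
  refine (hden.inv₀ (by positivity)).congr' ?_
  filter_upwards [hf_top.eventually_ge_atTop 0] with s hs
  rw [one_sub_sqrt_one_sub_inv hs, exp_neg]
  field_simp

noncomputable def warpFactor (n : ℕ) (c₀ ρ : ℝ) : ℝ := c₀ * sinh ρ ^ (n - 2) * cosh ρ ^ 2

lemma warpFactor_nonneg {n : ℕ} {c₀ ρ : ℝ} (hc₀ : 0 ≤ c₀) (hρ : 0 ≤ ρ) :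
    0 ≤ warpFactor n c₀ ρ := by
  have := sinh_nonneg_iff.mpr hρ
  unfold warpFactor
  positivity

lemma tendsto_warpFactor_mul_exp {n : ℕ} (hn : 2 ≤ n) (c₀ : ℝ) :
    Tendsto (fun s => warpFactor n c₀ s * exp (-(n * s))) atTop (𝓝 (c₀ / 2 ^ n)) := by
  have h := (tendsto_const_nhds (x := c₀)).mul (tendsto_sinh_mul_exp_neg.pow (n - 2)) |>.mul
    (tendsto_cosh_mul_exp_neg.pow 2)
  have hn2 : n - 2 + 2 = n := by omega
  have hval : c₀ * (1 / 2) ^ (n - 2) * (1 / 2) ^ 2 = c₀ / 2 ^ n := by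
    rw [mul_assoc, ← pow_add, hn2, one_div_pow, mul_one_div]
  refine (hval ▸ h).congr fun s => ?_
  have hexp : exp (-(n * s)) = exp (-s) ^ (n - 2) * exp (-s) ^ 2 := by
    rw [← pow_add, hn2, ← exp_nat_mul, mul_neg]
  rw [hexp, warpFactor]
  ring

/-- For the quasi-spherical solution `u(ρ) = √(1 − 1/(1 + c₀ sinh^{n−2}(ρ) cosh²(ρ)))`, the
function `1 − u` is integrable on `(0,∞)`, and with `U(ρ) = ρ + ∫_ρ^∞ (1 − u)` one has
`lim_{ρ→∞} (U(ρ) − ρ) e^{nρ} = 2^{n−1}/(n c₀)`. -/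
theorem stmt_4 (n : ℕ) (hn : 3 ≤ n) (c₀ : ℝ) (hc₀ : 0 < c₀)
    (u : ℝ → ℝ)
    (hu : ∀ ρ : ℝ, u ρ = Real.sqrt (1 - 1 / (1 + c₀ * Real.sinh ρ ^ (n - 2) * Real.cosh ρ ^ 2)))
    (U : ℝ → ℝ)
    (hU : ∀ ρ : ℝ, U ρ = ρ + ∫ s in Set.Ioi ρ, (1 - u s)) :
    IntegrableOn (fun s : ℝ => 1 - u s) (Set.Ioi (0 : ℝ)) ∧
    Tendsto (fun ρ : ℝ => (U ρ - ρ) * Real.exp ((n : ℝ) * ρ)) atTop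
      (nhds (2 ^ (n - 1) / ((n : ℝ) * c₀))) := by
  have hn0 : (0 : ℝ) < n := by positivity
  obtain rfl : u = fun s => √(1 - 1 / (1 + warpFactor n c₀ s)) := funext hu
  have hlim : Tendsto (fun s => (1 - √(1 - 1 / (1 + warpFactor n c₀ s))) * exp (n * s)) atTop
      (𝓝 (2 ^ (n - 1) / c₀)) := by
    convert tendsto_one_sub_sqrt_mul_exp hn0 (by positivity)
      (tendsto_warpFactor_mul_exp (by omega) c₀) using 2
    have h2n : (2 : ℝ) ^ n = 2 ^ (n - 1) * 2 := by rw [← pow_succ, Nat.sub_add_cancel (by omega)]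
    rw [h2n]
    field_simp
  have hcont : ContinuousOn (fun s => 1 - √(1 - 1 / (1 + warpFactor n c₀ s))) (Ici 0) := by
    have h : ∀ s ∈ Ici (0 : ℝ), 1 + warpFactor n c₀ s ≠ 0 := fun s hs =>
      (add_pos_of_pos_of_nonneg one_pos (warpFactor_nonneg hc₀.le hs)).ne'
    unfold warpFactor at h ⊢
    fun_prop (disch := assumption)
  have hint := integrableOn_Ioi_of_tendsto_mul_exp hn0 hcont hlim
  refine ⟨hint, ?_⟩
  convert tendsto_integral_Ioi_mul_exp hn0 hint hlim using 2 with ρ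
  · rw [hU]; ring
  · field_simp
end

section
/- Let n ≥ 3 be an integer and c₀ > 0, define u(ρ) = √(1 − 1/(1 + c₀·sinh^{n−2}(ρ)·cosh²(ρ))), U(ρ) := ρ + ∫_ρ^∞ (1 − u(s)) ds, and r(ρ) := ln( (e^{U(ρ)} + 1)/(e^{U(ρ)} − 1) ) for ρ > 0 (well defined since U(ρ) > ρ > 0). Then r is differentiable on (0, ∞), r(ρ) > 0, and r′(ρ) = −u(ρ)·sinh(r(ρ)) for every ρ > 0; equivalently, −(1/sinh r) dr = u dρ. -/
/-!
Put `φ(t) = log ((eᵗ + 1)/(eᵗ - 1)) = log coth (t/2)`. A direct computation gives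
`φ'(t) = -1/sinh t` and `sinh (φ t) = 1/sinh t`, so `r = φ ∘ U` satisfies `r' = -U' · sinh r`
by the chain rule. It remains to see `U' = u`: since `0 ≤ 1 - u ≤ 1/(1 + c₀ sinh^{n-2} cosh²)`
decays like `e^{-2ρ}`, the tail integral `∫_ρ^∞ (1 - u)` converges and, `u` being continuous,
has derivative `-(1 - u ρ)`. Finally `U ρ ≥ ρ > 0`, which makes `r` well defined and positive.
-/

open Real Filter MeasureTheory Set Topology

theorem hasDerivAt_integral_Ioi {E : Type*} [NormedAddCommGroup E] [NormedSpace ℝ E]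
    [CompleteSpace E] {f : ℝ → E} {a b : ℝ} (hf : IntegrableOn f (Ioi a)) (hab : a < b)
    (hb : ContinuousAt f b) : HasDerivAt (fun x => ∫ t in Ioi x, f t) (-f b) b := by
  have hsplit : (fun x => ∫ t in Ioi x, f t) =ᶠ[𝓝 b]
      fun x => (∫ t in Ioi a, f t) - ∫ t in a..x, f t := by
    filter_upwards [Ioi_mem_nhds hab] with x hx
    rw [← intervalIntegral.integral_Ioi_sub_Ioi hf hx.le, sub_sub_cancel]
  have hab_int : IntervalIntegrable f volume a b :=
    (intervalIntegrable_iff_integrableOn_Ioc_of_le hab.le).2 (hf.mono_set Ioc_subset_Ioi_self)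
  have hmeas : StronglyMeasurableAtFilter f (𝓝 b) :=
    ⟨Ioi a, Ioi_mem_nhds hab, hf.aestronglyMeasurable⟩
  rw [hsplit.hasDerivAt_iff]
  simpa using (intervalIntegral.integral_hasDerivAt_right hab_int hmeas hb).const_sub _

noncomputable def logCothHalf (t : ℝ) : ℝ := log ((exp t + 1) / (exp t - 1))

theorem logCothHalf_pos {t : ℝ} (ht : 0 < t) : 0 < logCothHalf t := by
  have hexp := one_lt_exp_iff.2 ht
  exact log_pos ((one_lt_div (by linarith)).2 (by linarith))

theorem sinh_logCothHalf {t : ℝ} (ht : 0 < t) : sinh (logCothHalf t) = 1 / sinh t := by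
  have hexp := one_lt_exp_iff.2 ht
  have he : exp t - 1 ≠ 0 := by linarith
  have he2 : exp t ^ 2 - 1 ≠ 0 := by nlinarith
  rw [logCothHalf, sinh_log (div_pos (by linarith) (by linarith)), sinh_eq, exp_neg]
  field_simp
  ring

theorem hasDerivAt_logCothHalf {t : ℝ} (ht : t ≠ 0) :
    HasDerivAt logCothHalf (-1 / sinh t) t := by
  have he : exp t - 1 ≠ 0 := sub_ne_zero.2 (mt (exp_eq_one_iff t).1 ht)
  have he2 : exp t ^ 2 - 1 ≠ 0 := by
    rw [show exp t ^ 2 - 1 = (exp t - 1) * (exp t + 1) by ring]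
    exact mul_ne_zero he (by positivity)
  have hq := ((hasDerivAt_exp t).add_const 1).div ((hasDerivAt_exp t).sub_const 1) he
  refine (hq.log (div_ne_zero (by positivity) he)).congr_deriv ?_
  rw [Pi.div_apply, sinh_eq, exp_neg]
  field_simp
  ring

theorem one_sub_sqrt_one_sub_le {y : ℝ} (hy : 0 ≤ y) : 1 - √(1 - y) ≤ y := by
  linarith [le_sqrt_self_iff.2 (by linarith : 1 - y ≤ 1)]

/-- The function `u` of the theorem, with `k = n - 2`. -/
noncomputable def quasiSphericalU (c : ℝ) (k : ℕ) (s : ℝ) : ℝ :=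
  √(1 - 1 / (1 + c * sinh s ^ k * cosh s ^ 2))

section QuasiSphericalU

variable {c : ℝ} {k : ℕ}

theorem quasiSphericalU_le_one (hc : 0 ≤ c) {s : ℝ} (hs : 0 ≤ s) : quasiSphericalU c k s ≤ 1 := by
  have := sinh_nonneg_iff.2 hs
  exact sqrt_le_one.2 (sub_le_self _ (by positivity))

theorem continuousAt_quasiSphericalU (hc : 0 ≤ c) {s : ℝ} (hs : 0 ≤ s) :
    ContinuousAt (quasiSphericalU c k) s := by
  have := sinh_nonneg_iff.2 hs
  unfold quasiSphericalU
  fun_prop (disch := positivity)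

theorem one_sub_quasiSphericalU_le (hc : 0 < c) {a s : ℝ} (ha : 0 < a) (has : a ≤ s) :
    1 - quasiSphericalU c k s ≤ 4 / (c * sinh a ^ k) * exp (-2 * s) := by
  have hsa : 0 < sinh a := sinh_pos_iff.2 ha
  have hss : 0 < sinh s := sinh_pos_iff.2 (ha.trans_le has)
  have hcosh : exp s / 2 ≤ cosh s := by
    rw [cosh_eq]
    linarith [exp_pos (-s)]
  have hG : c * sinh a ^ k * (exp s / 2) ^ 2 ≤ c * sinh s ^ k * cosh s ^ 2 := by
    gcongr
    exact sinh_le_sinh.2 has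
  calc 1 - quasiSphericalU c k s ≤ 1 / (1 + c * sinh s ^ k * cosh s ^ 2) :=
        one_sub_sqrt_one_sub_le (by positivity)
    _ ≤ 1 / (c * sinh a ^ k * (exp s / 2) ^ 2) :=
        one_div_le_one_div_of_le (by positivity) (by linarith)
    _ = 4 / (c * sinh a ^ k) * exp (-2 * s) := by
        rw [show -2 * s = -(s + s) by ring, exp_neg, exp_add]
        field_simp
        ring

theorem integrableOn_one_sub_quasiSphericalU (hc : 0 < c) {a : ℝ} (ha : 0 < a) :
    IntegrableOn (fun s => 1 - quasiSphericalU c k s) (Ioi a) := by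
  refine ((exp_neg_integrableOn_Ioi a two_pos).const_mul (4 / (c * sinh a ^ k))).mono' ?_ ?_
  · have : Measurable (quasiSphericalU c k) := by
      unfold quasiSphericalU
      fun_prop
    exact (measurable_const.sub this).aestronglyMeasurable
  · filter_upwards [ae_restrict_mem measurableSet_Ioi] with s hs
    rw [norm_of_nonneg (sub_nonneg.2 (quasiSphericalU_le_one hc.le (ha.trans hs).le))]
    exact one_sub_quasiSphericalU_le hc ha hs.le

end QuasiSphericalU

theorem stmt_7_general (n : ℕ) (c₀ : ℝ) (hc₀ : 0 < c₀)
    (u : ℝ → ℝ)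
    (hu : ∀ ρ : ℝ, u ρ = Real.sqrt (1 - 1 / (1 + c₀ * Real.sinh ρ ^ (n - 2) * Real.cosh ρ ^ 2)))
    (U : ℝ → ℝ)
    (hU : ∀ ρ : ℝ, U ρ = ρ + ∫ s in Set.Ioi ρ, (1 - u s))
    (r : ℝ → ℝ)
    (hr : ∀ ρ : ℝ, r ρ = Real.log ((Real.exp (U ρ) + 1) / (Real.exp (U ρ) - 1))) :
    ∀ ρ : ℝ, 0 < ρ →
      0 < r ρ ∧ HasDerivAt r (-(u ρ * Real.sinh (r ρ))) ρ := by
  obtain rfl : u = quasiSphericalU c₀ (n - 2) := funext hu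
  obtain rfl : r = logCothHalf ∘ U := funext hr
  intro ρ hρ
  have hU_pos : 0 < U ρ := by
    rw [hU]
    refine add_pos_of_pos_of_nonneg hρ (setIntegral_nonneg measurableSet_Ioi fun s hs => ?_)
    exact sub_nonneg.2 (quasiSphericalU_le_one hc₀.le (hρ.trans hs).le)
  have hU_deriv : HasDerivAt U (quasiSphericalU c₀ (n - 2) ρ) ρ := by
    rw [funext hU]
    refine ((hasDerivAt_id' ρ).add <| hasDerivAt_integral_Ioi
      (integrableOn_one_sub_quasiSphericalU hc₀ (half_pos hρ)) (half_lt_self hρ)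
      (continuousAt_const.sub (continuousAt_quasiSphericalU hc₀.le hρ.le))).congr_deriv ?_
    ring
  refine ⟨logCothHalf_pos hU_pos, ?_⟩
  refine ((hasDerivAt_logCothHalf hU_pos.ne').comp ρ hU_deriv).congr_deriv ?_
  rw [Function.comp_apply, sinh_logCothHalf hU_pos]
  ring

/-- With `u(ρ) = √(1 − 1/(1 + c₀ sinh^{n−2}(ρ) cosh²(ρ)))`, `U(ρ) = ρ + ∫_ρ^∞ (1 − u)`, and
`r(ρ) = ln((e^{U(ρ)} + 1)/(e^{U(ρ)} − 1))`, the function `r` is differentiable on `(0,∞)`,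
positive, and satisfies `r′(ρ) = −u(ρ) sinh(r(ρ))`, i.e. `−(1/sinh r) dr = u dρ`. -/
theorem stmt_7 (n : ℕ) (hn : 3 ≤ n) (c₀ : ℝ) (hc₀ : 0 < c₀)
    (u : ℝ → ℝ)
    (hu : ∀ ρ : ℝ, u ρ = Real.sqrt (1 - 1 / (1 + c₀ * Real.sinh ρ ^ (n - 2) * Real.cosh ρ ^ 2)))
    (U : ℝ → ℝ)
    (hU : ∀ ρ : ℝ, U ρ = ρ + ∫ s in Set.Ioi ρ, (1 - u s))
    (r : ℝ → ℝ)
    (hr : ∀ ρ : ℝ, r ρ = Real.log ((Real.exp (U ρ) + 1) / (Real.exp (U ρ) - 1))) :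
    ∀ ρ : ℝ, 0 < ρ →
      0 < r ρ ∧ HasDerivAt r (-(u ρ * Real.sinh (r ρ))) ρ :=
  stmt_7_general n c₀ hc₀ u hu U hU r hr
end

section
/- Let n ≥ 3 be an integer and c₀ > 0, define u(ρ) = √(1 − 1/(1 + c₀·sinh^{n−2}(ρ)·cosh²(ρ))), U(ρ) := ρ + ∫_ρ^∞ (1 − u(s)) ds, and r(ρ) := ln( (e^{U(ρ)} + 1)/(e^{U(ρ)} − 1) ) for ρ > 0. Then lim_{ρ→∞} r(ρ)·e^{ρ} = 2. -/
/-!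
For `s ≥ 1` one has `c₀ sinh^{n-2}(s) cosh²(s) ≥ c₀ eˢ / 2`, hence
`0 ≤ 1 - u(s) ≤ (2/c₀) e^{-s}` and `U(ρ) = ρ + O(e^{-ρ})`. Writing
`r(ρ) e^ρ = [x log((x+1)/(x-1))]_{x = e^{U(ρ)}} · e^{ρ - U(ρ)}`, the first factor tends to `2`
(it is `x log(1 + 1/x) - x log(1 - 1/x)`) and the second to `1`.
-/

open Real Filter MeasureTheory Set Topology

theorem tendsto_mul_log_add_one_div_sub_one_atTop :
    Tendsto (fun x : ℝ => x * log ((x + 1) / (x - 1))) atTop (𝓝 2) := by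
  have h := (tendsto_mul_log_one_add_div_atTop 1).sub (tendsto_mul_log_one_add_div_atTop (-1))
  norm_num at h
  refine h.congr' ?_
  filter_upwards [eventually_gt_atTop 1] with x hx
  have hx₀ : x ≠ 0 := by positivity
  have hx₁ : x - 1 ≠ 0 := by linarith
  rw [show 1 + x⁻¹ = (x + 1) / x by field_simp,
    show 1 + -1 / x = (x - 1) / x by field_simp; ring,
    log_div (by positivity) hx₀, log_div hx₁ hx₀, log_div (by positivity) hx₁]
  ring

theorem tendsto_log_exp_add_one_div_exp_sub_one_mul_exp {U : ℝ → ℝ}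
    (hU : Tendsto (fun ρ => U ρ - ρ) atTop (𝓝 0)) :
    Tendsto (fun ρ => log ((exp (U ρ) + 1) / (exp (U ρ) - 1)) * exp ρ) atTop (𝓝 2) := by
  have hU_top : Tendsto U atTop atTop :=
    (tendsto_id.atTop_add hU).congr fun ρ => by simp
  have h_main := tendsto_mul_log_add_one_div_sub_one_atTop.comp (tendsto_exp_atTop.comp hU_top)
  have h_corr : Tendsto (fun ρ => exp (-(U ρ - ρ))) atTop (𝓝 1) := by
    rw [← exp_zero, ← neg_zero]
    exact (continuous_exp.tendsto _).comp hU.neg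
  refine (mul_one (2 : ℝ) ▸ h_main.mul h_corr).congr fun ρ => ?_
  simp only [Function.comp_apply, neg_sub, exp_sub]
  field_simp

theorem one_sub_sqrt_one_sub_mem_Icc {x : ℝ} (h₀ : 0 ≤ x) : 1 - √(1 - x) ∈ Icc 0 x := by
  have h_le : 1 - x ≤ √(1 - x) := le_sqrt_self_iff.mpr (by linarith)
  have h_sqrt_le : √(1 - x) ≤ 1 := sqrt_le_one.mpr (by linarith)
  constructor <;> linarith

theorem exp_div_two_le_sinh_pow_mul_cosh_sq (m : ℕ) {s : ℝ} (hs : 1 ≤ s) :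
    exp s / 2 ≤ sinh s ^ m * cosh s ^ 2 := by
  have h_sinh : 1 ≤ sinh s ^ m := one_le_pow₀ (hs.trans (self_le_sinh_iff.mpr (by linarith)))
  calc exp s / 2 ≤ cosh s := by rw [cosh_eq]; linarith [exp_pos (-s)]
    _ ≤ cosh s ^ 2 := by nlinarith [one_le_cosh s]
    _ ≤ sinh s ^ m * cosh s ^ 2 := le_mul_of_one_le_left (sq_nonneg _) h_sinh

/-- `1 - u` for the quasi-spherical solution `u` of (3.13), with `m = n - 2`. -/
noncomputable def quasiSphericalDefect (c : ℝ) (m : ℕ) (s : ℝ) : ℝ :=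
  1 - √(1 - 1 / (1 + c * sinh s ^ m * cosh s ^ 2))

section quasiSphericalDefect

variable {c : ℝ} {m : ℕ}

theorem quasiSphericalDefect_mem_Icc (hc : 0 < c) {s : ℝ} (hs : 1 ≤ s) :
    quasiSphericalDefect c m s ∈ Icc 0 (2 / c * exp (-s)) := by
  set f := c * sinh s ^ m * cosh s ^ 2
  have hf : c * exp s / 2 ≤ f := by
    have := mul_le_mul_of_nonneg_left (exp_div_two_le_sinh_pow_mul_cosh_sq m hs) hc.le
    linarith
  have hf_pos : 0 < f := lt_of_lt_of_le (by positivity) hf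
  have h_inv_le : 1 / (1 + f) ≤ 2 / c * exp (-s) := by
    rw [exp_neg, div_le_iff₀ (by positivity)]
    field_simp
    nlinarith [exp_pos s]
  obtain ⟨h₀, h₁⟩ := one_sub_sqrt_one_sub_mem_Icc (x := 1 / (1 + f)) (by positivity)
  exact ⟨h₀, h₁.trans h_inv_le⟩

theorem measurable_quasiSphericalDefect : Measurable (quasiSphericalDefect c m) := by
  unfold quasiSphericalDefect
  fun_prop

theorem integrableOn_quasiSphericalDefect_Ioi (hc : 0 < c) {a : ℝ} (ha : 1 ≤ a) :
    IntegrableOn (quasiSphericalDefect c m) (Ioi a) := by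
  refine ((integrableOn_exp_neg_Ioi a).const_mul (2 / c)).mono'
    measurable_quasiSphericalDefect.aestronglyMeasurable.restrict ?_
  filter_upwards [ae_restrict_mem measurableSet_Ioi] with s hs
  obtain ⟨h₀, h₁⟩ := quasiSphericalDefect_mem_Icc (m := m) hc (ha.trans hs.le)
  rwa [norm_of_nonneg h₀]

theorem integral_quasiSphericalDefect_Ioi_mem_Icc (hc : 0 < c) {ρ : ℝ} (hρ : 1 ≤ ρ) :
    ∫ s in Ioi ρ, quasiSphericalDefect c m s ∈ Icc 0 (2 / c * exp (-ρ)) := by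
  have h_bound (s : ℝ) (hs : s ∈ Ioi ρ) :=
    quasiSphericalDefect_mem_Icc (m := m) hc (hρ.trans hs.out.le)
  refine ⟨setIntegral_nonneg measurableSet_Ioi fun s hs => (h_bound s hs).1, ?_⟩
  calc ∫ s in Ioi ρ, quasiSphericalDefect c m s ≤ ∫ s in Ioi ρ, 2 / c * exp (-s) :=
        setIntegral_mono_on (integrableOn_quasiSphericalDefect_Ioi hc hρ)
          ((integrableOn_exp_neg_Ioi ρ).const_mul _) measurableSet_Ioi fun s hs => (h_bound s hs).2
    _ = 2 / c * exp (-ρ) := by rw [integral_const_mul, integral_exp_neg_Ioi]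

theorem tendsto_integral_quasiSphericalDefect_Ioi (hc : 0 < c) :
    Tendsto (fun ρ => ∫ s in Ioi ρ, quasiSphericalDefect c m s) atTop (𝓝 0) := by
  have h_exp : Tendsto (fun ρ => 2 / c * exp (-ρ)) atTop (𝓝 0) := by
    simpa using tendsto_exp_neg_atTop_nhds_zero.const_mul (2 / c)
  refine tendsto_of_tendsto_of_tendsto_of_le_of_le' tendsto_const_nhds h_exp ?_ ?_ <;>
    filter_upwards [eventually_ge_atTop 1] with ρ hρ
  exacts [(integral_quasiSphericalDefect_Ioi_mem_Icc hc hρ).1,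
    (integral_quasiSphericalDefect_Ioi_mem_Icc hc hρ).2]

end quasiSphericalDefect

theorem stmt_8_general (n : ℕ) (c₀ : ℝ) (hc₀ : 0 < c₀)
    (u : ℝ → ℝ)
    (hu : ∀ ρ : ℝ, u ρ = Real.sqrt (1 - 1 / (1 + c₀ * Real.sinh ρ ^ (n - 2) * Real.cosh ρ ^ 2)))
    (U : ℝ → ℝ)
    (hU : ∀ ρ : ℝ, U ρ = ρ + ∫ s in Set.Ioi ρ, (1 - u s))
    (r : ℝ → ℝ)
    (hr : ∀ ρ : ℝ, r ρ = Real.log ((Real.exp (U ρ) + 1) / (Real.exp (U ρ) - 1))) :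
    Tendsto (fun ρ : ℝ => r ρ * Real.exp ρ) atTop (nhds 2) := by
  have h_defect : (fun s => 1 - u s) = quasiSphericalDefect c₀ (n - 2) := by
    funext s
    rw [hu, quasiSphericalDefect]
  have h_tail : Tendsto (fun ρ => U ρ - ρ) atTop (𝓝 0) :=
    (tendsto_integral_quasiSphericalDefect_Ioi hc₀).congr fun ρ => by
      rw [hU, ← h_defect]
      ring
  simpa only [hr] using tendsto_log_exp_add_one_div_exp_sub_one_mul_exp h_tail

/-- With `u(ρ) = √(1 − 1/(1 + c₀ sinh^{n−2}(ρ) cosh²(ρ)))`, `U(ρ) = ρ + ∫_ρ^∞ (1 − u)`, and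
`r(ρ) = ln((e^{U(ρ)} + 1)/(e^{U(ρ)} − 1))`, one has `lim_{ρ→∞} r(ρ) e^{ρ} = 2`. -/
theorem stmt_8 (n : ℕ) (hn : 3 ≤ n) (c₀ : ℝ) (hc₀ : 0 < c₀)
    (u : ℝ → ℝ)
    (hu : ∀ ρ : ℝ, u ρ = Real.sqrt (1 - 1 / (1 + c₀ * Real.sinh ρ ^ (n - 2) * Real.cosh ρ ^ 2)))
    (U : ℝ → ℝ)
    (hU : ∀ ρ : ℝ, U ρ = ρ + ∫ s in Set.Ioi ρ, (1 - u s))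
    (r : ℝ → ℝ)
    (hr : ∀ ρ : ℝ, r ρ = Real.log ((Real.exp (U ρ) + 1) / (Real.exp (U ρ) - 1))) :
    Tendsto (fun ρ : ℝ => r ρ * Real.exp ρ) atTop (nhds 2) :=
  stmt_8_general n c₀ hc₀ u hu U hU r hr
end
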